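/- Let n ≥ 2 be an even integer, p a real number with p > 1, and t a nonzero complex number with p^(−1/2) < |t| < p^(1/2). Define v ∈ (ℂ×)^n by v_i = p^((n+1−2i)/2)·t for 1 ≤ i ≤ n/2 and v_i = p^((n+1−2i)/2)·t⁻¹ for n/2 < i ≤ n, and define v′ by v′_i = v_i for i < n and v′_n = (v_n)⁻¹. Then there exist no permutation π of {1,…,n} and signs ε : {1,…,n} → {+1,−1} with ∏_{i=1}^n ε_i = 1 such that v′_i = (v_{π(i)})^(ε_i) for all i. In other words, v and v′ lie in distinct orbits for the action of the Weyl group of type D_n (permutations combined with inversion of an even number of coordinates) on (ℂ×)^n. -/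

import Mathlib

/-!
The product `∏ᵢ sign (log |wᵢ|) ∈ {-1, 0, 1}` is an invariant of the Weyl group of type `D_n`:
a permutation does not change it and inverting a coordinate multiplies it by `-1`, so an even
number of inversions preserves it. The single inversion turning `v` into `v′` therefore forces
it to vanish on `v`, i.e. some `|vᵢ| = 1`. But `|t| > p^(-1/2)` and the exponents `(n+1-2i)/2`
are `≥ 1/2` for `i ≤ n/2` and `≤ -1/2` for `i > n/2` (as `n` is even), so `|vᵢ| > 1`
resp. `|vᵢ| < 1`.
-/

open SignType

section LogNormSign

variable {𝕜 ι : Type*} [NormedDivisionRing 𝕜] [Fintype ι]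

noncomputable def logNormSignProd (w : ι → 𝕜) : SignType := ∏ i, sign (Real.log ‖w i‖)

theorem sign_log_norm_zpow (z : 𝕜) (k : ℤ) :
    sign (Real.log ‖z ^ k‖) = sign k * sign (Real.log ‖z‖) := by
  rw [norm_zpow, Real.log_zpow, sign_mul, sign_intCast]

theorem logNormSignProd_zpow_comp_perm (w : ι → 𝕜) (π : Equiv.Perm ι) (ε : ι → ℤ) :
    logNormSignProd (fun i => w (π i) ^ ε i) = sign (∏ i, ε i) * logNormSignProd w := by
  simp only [logNormSignProd, sign_log_norm_zpow, Finset.prod_mul_distrib,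
    Equiv.prod_comp π fun j => sign (Real.log ‖w j‖)]
  congr 1
  exact (map_prod (signHom : ℤ →*₀ SignType) ε _).symm

theorem logNormSignProd_ne_zero {w : ι → 𝕜} (hw : ∀ i, w i ≠ 0 ∧ ‖w i‖ ≠ 1) :
    logNormSignProd w ≠ 0 :=
  Finset.prod_ne_zero_iff.mpr fun i _ => sign_ne_zero.mpr <|
    Real.log_ne_zero_of_pos_of_ne_one (norm_pos_iff.mpr (hw i).1) (hw i).2

end LogNormSign

theorem one_lt_rpow_mul {p x e : ℝ} (hp : 1 < p) (hx : p ^ (-(1 : ℝ) / 2) < x) (he : 1 / 2 ≤ e) :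
    1 < p ^ e * x :=
  calc 1 ≤ p ^ (e - 1 / 2) := Real.one_le_rpow hp.le (by linarith)
    _ = p ^ e * p ^ (-(1 : ℝ) / 2) := by
        rw [← Real.rpow_add (by linarith)]; ring_nf
    _ < p ^ e * x := by gcongr

theorem rpow_mul_inv_lt_one {p x e : ℝ} (hp : 1 < p) (hx : p ^ (-(1 : ℝ) / 2) < x)
    (he : e ≤ -1 / 2) : p ^ e * x⁻¹ < 1 := by
  have hx0 : 0 < x := (Real.rpow_pos_of_pos (by linarith) _).trans hx
  rw [← div_eq_mul_inv, div_lt_one hx0]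
  exact (Real.rpow_le_rpow_of_exponent_le hp.le (by linarith)).trans_lt hx

noncomputable def satakeParams (n : ℕ) (p : ℝ) (t : ℂ) : Fin n → ℂ := fun i =>
  if (i : ℕ) + 1 ≤ n / 2
  then ((p ^ ((((n : ℝ)) + 1 - 2 * (((i : ℕ) : ℝ) + 1)) / 2) : ℝ) : ℂ) * t
  else ((p ^ ((((n : ℝ)) + 1 - 2 * (((i : ℕ) : ℝ) + 1)) / 2) : ℝ) : ℂ) * t⁻¹

section Satake

variable {n : ℕ} {p : ℝ} {t : ℂ}

theorem one_lt_norm_satakeParams (hp : 1 < p) (htlow : p ^ (-(1 : ℝ) / 2) < ‖t‖) {i : Fin n}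
    (hi : (i : ℕ) + 1 ≤ n / 2) : 1 < ‖satakeParams n p t i‖ := by
  have hi' : 2 * ((i : ℝ) + 1) ≤ n := by exact_mod_cast (by omega : 2 * ((i : ℕ) + 1) ≤ n)
  rw [satakeParams, if_pos hi, norm_mul, Complex.norm_real, Real.norm_of_nonneg (by positivity)]
  exact one_lt_rpow_mul hp htlow (by linarith)

theorem norm_satakeParams_lt_one (heven : Even n) (hp : 1 < p)
    (htlow : p ^ (-(1 : ℝ) / 2) < ‖t‖) {i : Fin n} (hi : ¬(i : ℕ) + 1 ≤ n / 2) :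
    ‖satakeParams n p t i‖ < 1 := by
  obtain ⟨m, rfl⟩ := heven
  have hi' : (m : ℝ) + m + 2 ≤ 2 * ((i : ℝ) + 1) := by
    exact_mod_cast (by omega : m + m + 2 ≤ 2 * ((i : ℕ) + 1))
  rw [satakeParams, if_neg hi, norm_mul, norm_inv, Complex.norm_real,
    Real.norm_of_nonneg (by positivity)]
  exact rpow_mul_inv_lt_one hp htlow (by push_cast; linarith)

theorem satakeParams_ne_zero_and_norm_ne_one (heven : Even n) (hp : 1 < p)
    (htlow : p ^ (-(1 : ℝ) / 2) < ‖t‖) (i : Fin n) :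
    satakeParams n p t i ≠ 0 ∧ ‖satakeParams n p t i‖ ≠ 1 := by
  by_cases hi : (i : ℕ) + 1 ≤ n / 2
  · have h := one_lt_norm_satakeParams hp htlow hi
    exact ⟨norm_pos_iff.mp (by linarith), h.ne'⟩
  · refine ⟨?_, (norm_satakeParams_lt_one heven hp htlow hi).ne⟩
    have ht : t ≠ 0 := norm_pos_iff.mp ((Real.rpow_pos_of_pos (by linarith) _).trans htlow)
    rw [satakeParams, if_neg hi]
    exact mul_ne_zero (by exact_mod_cast (Real.rpow_pos_of_pos (by linarith) _).ne')
      (inv_ne_zero ht)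

end Satake

theorem prod_ite_add_one_lt (n : ℕ) (hn : n ≠ 0) :
    ∏ i : Fin n, (if (i : ℕ) + 1 < n then (1 : ℤ) else -1) = -1 := by
  obtain ⟨m, rfl⟩ := Nat.exists_eq_succ_of_ne_zero hn
  rw [Fin.prod_univ_castSucc]
  simp

theorem hecke_matrices_not_Dn_conjugate_general (n : ℕ) (hn : 2 ≤ n) (heven : Even n)
    (p : ℝ) (hp : 1 < p) (t : ℂ)
    (htlow : p ^ (-(1 : ℝ) / 2) < ‖t‖) :
    let v : Fin n → ℂ := fun i =>
      if (i : ℕ) + 1 ≤ n / 2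
      then ((p ^ ((((n : ℝ)) + 1 - 2 * (((i : ℕ) : ℝ) + 1)) / 2) : ℝ) : ℂ) * t
      else ((p ^ ((((n : ℝ)) + 1 - 2 * (((i : ℕ) : ℝ) + 1)) / 2) : ℝ) : ℂ) * t⁻¹
    let v' : Fin n → ℂ := fun i => if (i : ℕ) + 1 < n then v i else (v i)⁻¹
    ¬ ∃ (π : Equiv.Perm (Fin n)) (ε : Fin n → ℤ),
        (∀ i, ε i = 1 ∨ ε i = -1) ∧ (∏ i, ε i) = 1 ∧
        (∀ i, v' i = v (π i) ^ ε i) := by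
  intro v v'
  rintro ⟨π, ε, -, hprod, hmap⟩
  have hv : v = satakeParams n p t := rfl
  have hv' : v' = fun i => v (Equiv.refl _ i) ^ (if (i : ℕ) + 1 < n then (1 : ℤ) else -1) := by
    funext i
    simp only [v', Equiv.refl_apply]
    split_ifs <;> simp
  have hweyl : logNormSignProd v' = logNormSignProd v := by
    rw [funext hmap, logNormSignProd_zpow_comp_perm, hprod, sign_one, one_mul]
  have hflip : logNormSignProd v' = -logNormSignProd v := by
    rw [hv', logNormSignProd_zpow_comp_perm, prod_ite_add_one_lt n (by omega)]
    simp
  have eq_zero_of_eq_neg : ∀ s : SignType, s = -s → s = 0 := by decide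
  exact logNormSignProd_ne_zero (hv ▸ satakeParams_ne_zero_and_norm_ne_one heven hp htlow)
    (eq_zero_of_eq_neg _ (hweyl.symm.trans hflip))

/-- Let `n ≥ 2` be even, `p > 1` real, and `t` a nonzero complex number with
`p^(−1/2) < |t| < p^(1/2)`.  Let `v` be the tuple of Satake parameters
`v_i = p^((n+1−2i)/2)·t` for `1 ≤ i ≤ n/2` and `v_i = p^((n+1−2i)/2)·t⁻¹` for
`n/2 < i ≤ n` (below, `i : Fin n` corresponds to the 1-indexed index `(i:ℕ)+1`),
and let `v′` agree with `v` except that its last coordinate is inverted.  Then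
`v` and `v′` are not in the same orbit of the Weyl group of type `D_n`
(permutations combined with inversion of an even number of coordinates). -/
theorem hecke_matrices_not_Dn_conjugate (n : ℕ) (hn : 2 ≤ n) (heven : Even n)
    (p : ℝ) (hp : 1 < p) (t : ℂ) (ht : t ≠ 0)
    (htlow : p ^ (-(1 : ℝ) / 2) < ‖t‖)
    (htup : ‖t‖ < p ^ ((1 : ℝ) / 2)) :
    let v : Fin n → ℂ := fun i =>
      if (i : ℕ) + 1 ≤ n / 2
      then ((p ^ ((((n : ℝ)) + 1 - 2 * (((i : ℕ) : ℝ) + 1)) / 2) : ℝ) : ℂ) * t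
      else ((p ^ ((((n : ℝ)) + 1 - 2 * (((i : ℕ) : ℝ) + 1)) / 2) : ℝ) : ℂ) * t⁻¹
    let v' : Fin n → ℂ := fun i => if (i : ℕ) + 1 < n then v i else (v i)⁻¹
    ¬ ∃ (π : Equiv.Perm (Fin n)) (ε : Fin n → ℤ),
        (∀ i, ε i = 1 ∨ ε i = -1) ∧ (∏ i, ε i) = 1 ∧
        (∀ i, v' i = v (π i) ^ ε i) :=
  hecke_matrices_not_Dn_conjugate_general n hn heven p hp t htlow
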